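/- arXiv:2006.04644 — 3 statements merged into one kernel-verified Lean document; each statement's English description precedes it below -/
import Mathlib

section
/- Let T be a normal operator on a Hilbert space H, A = (I + T*T)⁻¹, and B = TA. Then T = A⁻¹B as unbounded operators, i.e., dom(T) = {x : Bx ∈ range(A)} and Tx = A⁻¹(Bx) for such x. -/
open LinearPMap
open scoped LinearPMap InnerProduct

variable {H : Type*} [NormedAddCommGroup H] [InnerProductSpace ℂ H] [CompleteSpace H]

/-- The natural domain of the composition `g ∘ f`: `{x ∈ dom f : f x ∈ dom g}`. -/
def pcompDomain (g f : H →ₗ.[ℂ] H) : Submodule ℂ H where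
  carrier := {x | ∃ hx : x ∈ f.domain, f ⟨x, hx⟩ ∈ g.domain}
  add_mem' := by
    rintro a b ⟨ha, ha'⟩ ⟨hb, hb'⟩
    refine ⟨add_mem ha hb, ?_⟩
    have h : f ⟨a + b, add_mem ha hb⟩ = f ⟨a, ha⟩ + f ⟨b, hb⟩ := f.map_add ⟨a, ha⟩ ⟨b, hb⟩
    rw [h]; exact add_mem ha' hb'
  zero_mem' := ⟨zero_mem _, by
    have h : f ⟨0, zero_mem _⟩ = 0 := f.map_zero
    rw [h]; exact zero_mem _⟩
  smul_mem' := by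
    rintro c a ⟨ha, ha'⟩
    refine ⟨Submodule.smul_mem _ c ha, ?_⟩
    have h : f ⟨c • a, Submodule.smul_mem _ c ha⟩ = c • f ⟨a, ha⟩ := f.map_smul c ⟨a, ha⟩
    rw [h]; exact Submodule.smul_mem _ c ha'

/-- Composition `g ∘ f` of unbounded operators, with its natural domain
`{x ∈ dom f : f x ∈ dom g}`. -/
noncomputable def pcomp (g f : H →ₗ.[ℂ] H) : H →ₗ.[ℂ] H :=
  g.comp (f.domRestrict (pcompDomain g f)) (by
    rintro ⟨x, hx⟩
    obtain ⟨h1, h2⟩ := hx.1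
    have : f.domRestrict (pcompDomain g f) ⟨x, hx⟩ = f ⟨x, h1⟩ :=
      LinearPMap.domRestrict_apply rfl
    rw [this]; exact h2)

/-- The identity as an unbounded operator. -/
noncomputable def pid : H →ₗ.[ℂ] H := LinearMap.id.toPMap ⊤

noncomputable example (T : H →ₗ.[ℂ] H) : H →ₗ.[ℂ] H := pid + pcomp T† T

set_option linter.unusedSectionVars false

lemma mem_pcomp_domain {g f : H →ₗ.[ℂ] H} {x : H} :
    x ∈ (pcomp g f).domain ↔ ∃ hx : x ∈ f.domain, f ⟨x, hx⟩ ∈ g.domain := by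
  constructor
  · rintro ⟨⟨h1, h2⟩, _⟩; exact ⟨h1, h2⟩
  · rintro ⟨h1, h2⟩; exact ⟨⟨h1, h2⟩, h1⟩

lemma pcomp_apply' {g f : H →ₗ.[ℂ] H} {x : H} (hx : x ∈ (pcomp g f).domain)
    (h1 : x ∈ f.domain) (h2 : f ⟨x, h1⟩ ∈ g.domain) :
    pcomp g f ⟨x, hx⟩ = g ⟨f ⟨x, h1⟩, h2⟩ := by
  show g _ = _
  refine congrArg g (Subtype.ext ?_)
  exact LinearPMap.domRestrict_apply rfl

lemma pmap_eq_apply {f g : H →ₗ.[ℂ] H} (h : f = g) {x : H} (hx : x ∈ f.domain)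
    (hx' : x ∈ g.domain) : f ⟨x, hx⟩ = g ⟨x, hx'⟩ := by subst h; rfl

lemma S_mem {T S : H →ₗ.[ℂ] H} (hS : S = pid + pcomp T† T) {z : H} :
    z ∈ S.domain ↔ z ∈ (pcomp T† T).domain := by
  subst hS
  exact ⟨fun h => h.2, fun h => ⟨trivial, h⟩⟩

lemma S_apply' {T S : H →ₗ.[ℂ] H} (hS : S = pid + pcomp T† T) {x : H}
    (hx : x ∈ S.domain) (hx' : x ∈ (pcomp T† T).domain) :
    S ⟨x, hx⟩ = x + pcomp T† T ⟨x, hx'⟩ := by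
  subst hS
  have h := LinearPMap.add_apply pid (pcomp T† T) ⟨x, hx⟩
  rw [h]
  rfl

theorem stmt5 (T : H →ₗ.[ℂ] H) (hclosed : T.IsClosed) (hdense : Dense (T.domain : Set H))
    (hnormal : pcomp T† T = pcomp T T†)
    (S : H →ₗ.[ℂ] H) (hS : S = pid + pcomp T† T) (A B : H →L[ℂ] H)
    (hA₁ : ∀ x : S.domain, A (S x) = (x : H))
    (hA₂ : ∀ y : H, ∃ h : A y ∈ S.domain, S ⟨A y, h⟩ = y)
    (hB : ∀ x : H, ∃ h : A x ∈ T.domain, T ⟨A x, h⟩ = B x) :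
    (∀ x : H, x ∈ T.domain ↔ B x ∈ Set.range A) ∧
    (∀ x : T.domain, A (T x) = B (x : H)) := by
  have key : ∀ (x : H) (hxT : x ∈ T.domain), A (T ⟨x, hxT⟩) = B x := by
    intro x hxT
    obtain ⟨hu, hSu⟩ := hA₂ x
    obtain ⟨hB1, hB2⟩ := hB x
    have hu' : A x ∈ (pcomp T† T).domain := (S_mem hS).mp hu
    obtain ⟨h1, h2⟩ := mem_pcomp_domain.mp hu'
    have h2' : B x ∈ (T†).domain := by rw [← hB2]; exact h2
    have hx_eq : x = A x + (T†) ⟨B x, h2'⟩ := by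
      conv_lhs => rw [← hSu]
      rw [S_apply' hS hu hu', pcomp_apply' hu' h1 h2]
      congr 2
      exact Subtype.ext hB2
    have hw_eq : ((T†) ⟨B x, h2'⟩ : H) = x - A x := (sub_eq_of_eq_add' hx_eq).symm
    have hwT : ((T†) ⟨B x, h2'⟩ : H) ∈ T.domain := hw_eq.symm ▸ sub_mem hxT h1
    have hBmem' : B x ∈ (pcomp T (T†)).domain := mem_pcomp_domain.mpr ⟨h2', hwT⟩
    have hBmem : B x ∈ (pcomp (T†) T).domain := by rw [hnormal]; exact hBmem'
    have hBS : B x ∈ S.domain := (S_mem hS).mpr hBmem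
    have hTw : T ⟨((T†) ⟨B x, h2'⟩ : H), hwT⟩ = T ⟨x, hxT⟩ - T ⟨A x, h1⟩ := by
      rw [← T.map_sub ⟨x, hxT⟩ ⟨A x, h1⟩]
      exact congrArg T (Subtype.ext hw_eq)
    have hval : S ⟨B x, hBS⟩ = T ⟨x, hxT⟩ := by
      rw [S_apply' hS hBS hBmem, pmap_eq_apply hnormal hBmem hBmem',
        pcomp_apply' hBmem' h2' hwT, hTw,
        (show T ⟨A x, h1⟩ = B x from hB2)]
      abel
    rw [← hval]
    exact hA₁ ⟨B x, hBS⟩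
  constructor
  · intro x
    constructor
    · intro hxT
      exact ⟨T ⟨x, hxT⟩, key x hxT⟩
    · rintro ⟨y, hy⟩
      obtain ⟨hyS, _⟩ := hA₂ y
      have hAy' : A y ∈ (pcomp T (T†)).domain := by
        rw [← hnormal]; exact (S_mem hS).mp hyS
      obtain ⟨hy1, hy2⟩ := mem_pcomp_domain.mp hAy'
      obtain ⟨hxS, hSx⟩ := hA₂ x
      have hx' : A x ∈ (pcomp T† T).domain := (S_mem hS).mp hxS
      obtain ⟨hx1, hx2⟩ := hB x
      obtain ⟨h1, h2⟩ := mem_pcomp_domain.mp hx'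
      have hx_eq : x = A x + ((T†) ⟨A y, hy1⟩ : H) := by
        conv_lhs => rw [← hSx]
        rw [S_apply' hS hxS hx', pcomp_apply' hx' h1 h2]
        congr 2
        refine Subtype.ext ?_
        show (T ⟨A x, h1⟩ : H) = A y
        rw [(show T ⟨A x, h1⟩ = B x from hx2)]
        exact hy.symm
      rw [hx_eq]
      exact add_mem hx1 hy2
  · rintro ⟨x, hxT⟩
    exact key x hxT
end

section
/- Every normal (possibly unbounded) operator T on a Hilbert space H admits a decomposition T = A⁻¹B where A is a bounded, injective, self-adjoint operator, B is a bounded normal operator, and AB = BA. -/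
open LinearPMap
open scoped LinearPMap InnerProduct

variable {H : Type*} [NormedAddCommGroup H] [InnerProductSpace ℂ H] [CompleteSpace H]

noncomputable example (T : H →ₗ.[ℂ] H) : H →ₗ.[ℂ] H := pid + pcomp T† T

open scoped InnerProductSpace

/-!
Take `A = (1 + T†T)⁻¹` and `B = T A`. Projecting `(z, 0)` onto the closed graph of `T` gives, for
every `z`, a unique `w` with `(w, z - w)` in the graph of `T†T`; the identity
`⟪w, z⟫ = ‖w‖² + ‖T w‖²` makes `A` and `B` contractions and `A` symmetric. Normality
`T†T = TT†` makes `A` commute with `T` and with `T†`, so that `B† = T† A`,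
`B† B = B B† = A - A²`, and `(x, y)` lies in the graph of `T` exactly when `B x = A y`.
-/

theorem le_and_le_of_sq_add_sq_le_mul {a b c : ℝ} (hc : 0 ≤ c) (h : a ^ 2 + b ^ 2 ≤ a * c) :
    a ≤ c ∧ b ≤ c := by
  have hac : a ≤ c := by nlinarith
  exact ⟨hac, by nlinarith⟩

namespace LinearPMap

section Adjoint

variable {𝕜 E F : Type*} [RCLike 𝕜] [NormedAddCommGroup E] [InnerProductSpace 𝕜 E]
  [NormedAddCommGroup F] [InnerProductSpace 𝕜 F] [CompleteSpace E] {T : E →ₗ.[𝕜] F}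

theorem inner_eq_of_mem_graph_adjoint (hT : Dense (T.domain : Set E)) {a b : E} {c y : F}
    (hac : (a, c) ∈ T.graph) (hyb : (y, b) ∈ T†.graph) : ⟪c, y⟫_𝕜 = ⟪a, b⟫_𝕜 := by
  rw [adjoint_graph_eq_graph_adjoint hT, Submodule.mem_adjoint_iff] at hyb
  exact sub_eq_zero.mp (hyb a c hac)

theorem eq_zero_of_mem_graph_of_mem_graph_adjoint (hT : Dense (T.domain : Set E)) {x : E} {y : F}
    (hxy : (x, y) ∈ T.graph) (hyx : (y, -x) ∈ T†.graph) : x = 0 := by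
  have h := congrArg RCLike.re (inner_eq_of_mem_graph_adjoint hT hxy hyx)
  rw [inner_neg_right, AddMonoidHom.map_neg, inner_self_eq_norm_sq, inner_self_eq_norm_sq] at h
  have hx : ‖x‖ ^ 2 = 0 := by nlinarith [sq_nonneg ‖y‖, sq_nonneg ‖x‖]
  simpa using hx

theorem norm_le_of_mem_graph_of_mem_graph_adjoint (hT : Dense (T.domain : Set E)) {x z : E} {y : F}
    (hxy : (x, y) ∈ T.graph) (hyz : (y, z - x) ∈ T†.graph) : ‖x‖ ≤ ‖z‖ ∧ ‖y‖ ≤ ‖z‖ := by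
  have h := congrArg RCLike.re (inner_eq_of_mem_graph_adjoint hT hxy hyz)
  rw [inner_sub_right, AddMonoidHom.map_sub, inner_self_eq_norm_sq, inner_self_eq_norm_sq] at h
  refine le_and_le_of_sq_add_sq_le_mul (norm_nonneg z) ?_
  calc ‖x‖ ^ 2 + ‖y‖ ^ 2 = RCLike.re ⟪x, z⟫_𝕜 := by linarith
    _ ≤ ‖x‖ * ‖z‖ := (RCLike.re_le_norm _).trans (norm_inner_le_norm x z)

theorem exists_mem_graph_mem_graph_adjoint [CompleteSpace F] (hT : T.IsClosed)
    (hT' : Dense (T.domain : Set E)) (z : E) : ∃ x y, (x, y) ∈ T.graph ∧ (y, z - x) ∈ T†.graph := by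
  let G : Submodule 𝕜 (WithLp 2 (E × F)) :=
    T.graph.comap (WithLp.linearEquiv 2 𝕜 (E × F)).toLinearMap
  have hG : _root_.IsClosed (G : Set (WithLp 2 (E × F))) :=
    hT.preimage (WithLp.prod_continuous_ofLp 2 E F)
  have : CompleteSpace G := hG.completeSpace_coe
  obtain ⟨p, hp, hperp⟩ := Submodule.HasOrthogonalProjection.exists_orthogonal (K := G)
    (WithLp.toLp 2 (z, 0))
  -- `(z, 0) - p = (z - x, -y)` is orthogonal to the graph: that is `(y, z - x) ∈ graph T†`.
  refine ⟨p.ofLp.1, p.ofLp.2, hp, ?_⟩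
  rw [adjoint_graph_eq_graph_adjoint hT', Submodule.mem_adjoint_iff]
  intro a c hac
  have h := (Submodule.mem_orthogonal G _).mp hperp (WithLp.toLp 2 (a, c)) hac
  simp only [WithLp.prod_inner_apply, WithLp.ofLp_sub, Prod.fst_sub,
    Prod.snd_sub, zero_sub, inner_neg_right] at h
  linear_combination -h

end Adjoint

end LinearPMap

theorem Submodule.exists_linearMap_of_existsUnique {R M N : Type*} [Semiring R]
    [AddCommMonoid M] [Module R M] [AddCommMonoid N] [Module R N] (G : Submodule R (M × N))
    (hG : ∀ x, ∃! y, (x, y) ∈ G) : ∃ L : M →ₗ[R] N, ∀ x y, (x, y) ∈ G ↔ L x = y := by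
  choose f hf hfu using hG
  let L : M →ₗ[R] N :=
    { toFun := f
      map_add' := fun x x' => (hfu _ _ (G.add_mem (hf x) (hf x'))).symm
      map_smul' := fun c x => (hfu _ _ (G.smul_mem c (hf x))).symm }
  exact ⟨L, fun x y => ⟨fun h => (hfu x y h).symm, fun h => h ▸ hf x⟩⟩

section Comp

variable {E : Type*} [NormedAddCommGroup E] [InnerProductSpace ℂ E]

theorem mem_graph_pcomp_iff {g f : E →ₗ.[ℂ] E} {x y : E} :
    (x, y) ∈ (pcomp g f).graph ↔ ∃ v, (x, v) ∈ f.graph ∧ (v, y) ∈ g.graph := by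
  have happ : ∀ (hx : x ∈ (pcomp g f).domain), pcomp g f ⟨x, hx⟩ = g ⟨f ⟨x, hx.1.1⟩, hx.1.2⟩ :=
    fun _ => rfl
  simp only [mem_graph_iff, Subtype.exists, exists_and_left, exists_eq_left]
  constructor
  · rintro ⟨hx, rfl⟩
    exact ⟨_, ⟨hx.1.1, rfl⟩, hx.1.2, (happ hx).symm⟩
  · rintro ⟨_, ⟨hx, rfl⟩, hv, rfl⟩
    exact ⟨⟨⟨hx, hv⟩, hx⟩, rfl⟩

end Comp

/-- `A = (1 + S)⁻¹`, phrased through the graph of `S`. -/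
def IsInvOneAdd {R M : Type*} [Ring R] [AddCommGroup M] [Module R M] (S : M →ₗ.[R] M)
    (A : M → M) : Prop :=
  ∀ z w, (w, z - w) ∈ S.graph ↔ A z = w

namespace IsInvOneAdd

section Module

variable {R M : Type*} [Ring R] [AddCommGroup M] [Module R M] {S : M →ₗ.[R] M} {A : M → M}

theorem mem_graph (hA : IsInvOneAdd S A) (z : M) : (A z, z - A z) ∈ S.graph :=
  (hA z (A z)).mpr rfl

theorem injective (hA : IsInvOneAdd S A) : Function.Injective A := fun z z' h => by
  have h' := S.mem_graph_snd_inj (hA.mem_graph z) (hA.mem_graph z') h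
  rwa [h, sub_left_inj] at h'

end Module

section Pcomp

-- `(R, U)` is `(T, T†)` or `(T†, T)`; the hypothesis `pcomp U R = pcomp R U` is normality.
variable {E : Type*} [NormedAddCommGroup E] [InnerProductSpace ℂ E] {R U : E →ₗ.[ℂ] E}
  {A : E → E}

theorem exists_mem_graph (hA : IsInvOneAdd (pcomp U R) A) (z : E) :
    ∃ v, (A z, v) ∈ R.graph ∧ (v, z - A z) ∈ U.graph :=
  mem_graph_pcomp_iff.mp (hA.mem_graph z)

theorem mem_graph_of_mem_graph (hA : IsInvOneAdd (pcomp U R) A) {z v : E}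
    (hv : (A z, v) ∈ R.graph) : (v, z - A z) ∈ U.graph := by
  obtain ⟨v', hv', hv'U⟩ := hA.exists_mem_graph z
  rwa [R.mem_graph_snd_inj hv hv' rfl]

theorem map_mem_graph (hA : IsInvOneAdd (pcomp U R) A) (hRU : pcomp U R = pcomp R U)
    {w v : E} (hwv : (w, v) ∈ R.graph) : (A w, A v) ∈ R.graph := by
  obtain ⟨b, hb, hbU⟩ := hA.exists_mem_graph w
  have hb' : (b, v - b) ∈ (pcomp R U).graph :=
    mem_graph_pcomp_iff.mpr ⟨w - A w, hbU, R.graph.sub_mem hwv hb⟩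
  rwa [(hA v b).mp (hRU ▸ hb')]

variable {C : E → E}

theorem apply_comm (hA : IsInvOneAdd (pcomp U R) A) (hRU : pcomp U R = pcomp R U)
    (hC : ∀ z, (A z, C z) ∈ R.graph) (z : E) : A (C z) = C (A z) :=
  R.mem_graph_snd_inj (hA.map_mem_graph hRU (hC z)) (hC (A z)) rfl

theorem mem_graph_iff (hA : IsInvOneAdd (pcomp U R) A) (hRU : pcomp U R = pcomp R U)
    (hC : ∀ z, (A z, C z) ∈ R.graph) {x y : E} : (x, y) ∈ R.graph ↔ C x = A y := by
  refine ⟨fun hxy => R.mem_graph_snd_inj (hC x) (hA.map_mem_graph hRU hxy) rfl, fun h => ?_⟩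
  obtain ⟨u, hu, huR⟩ := (hRU ▸ hA : IsInvOneAdd (pcomp R U) A).exists_mem_graph y
  have hux : u = x - A x :=
    U.mem_graph_snd_inj hu (hA.mem_graph_of_mem_graph (hC x)) h.symm
  have hsum := R.graph.add_mem (hC x) huR
  rwa [hux, h, Prod.mk_add_mk, add_sub_cancel, add_sub_cancel] at hsum

theorem apply_apply (hA : IsInvOneAdd (pcomp U R) A) (hRU : pcomp U R = pcomp R U)
    (hC : ∀ z, (A z, C z) ∈ R.graph) {D : E → E} (hD : ∀ z, (A z, D z) ∈ U.graph) (z : E) :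
    D (C z) = A z - A (A z) := by
  have h := hD (C z)
  rw [hA.apply_comm hRU hC] at h
  exact U.mem_graph_snd_inj h (hA.mem_graph_of_mem_graph (hC (A z))) rfl

end Pcomp

end IsInvOneAdd

section Resolvent

variable {E : Type*} [NormedAddCommGroup E] [InnerProductSpace ℂ E] [CompleteSpace E]
  {T : E →ₗ.[ℂ] E}

theorem existsUnique_mem_graph_pcomp_adjoint (hT : T.IsClosed) (hT' : Dense (T.domain : Set E))
    (z : E) : ∃! w, (w, z - w) ∈ (pcomp T† T).graph := by
  obtain ⟨x, y, hxy, hyz⟩ := exists_mem_graph_mem_graph_adjoint hT hT' z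
  refine ⟨x, mem_graph_pcomp_iff.mpr ⟨y, hxy, hyz⟩, fun w hw => ?_⟩
  obtain ⟨v, hwv, hvz⟩ := mem_graph_pcomp_iff.mp hw
  have hsub := T†.graph.sub_mem hvz hyz
  rw [Prod.mk_sub_mk, sub_sub_sub_cancel_left, ← neg_sub w x] at hsub
  exact sub_eq_zero.mp
    (eq_zero_of_mem_graph_of_mem_graph_adjoint hT' (T.graph.sub_mem hwv hxy) hsub)

theorem exists_isInvOneAdd_pcomp_adjoint (hT : T.IsClosed) (hT' : Dense (T.domain : Set E)) :
    ∃ A : E →ₗ[ℂ] E, IsInvOneAdd (pcomp T† T) A :=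
  Submodule.exists_linearMap_of_existsUnique ((pcomp T† T).graph.comap
    ((LinearMap.snd ℂ E E).prod (LinearMap.fst ℂ E E - LinearMap.snd ℂ E E)))
    (existsUnique_mem_graph_pcomp_adjoint hT hT')

theorem exists_isInvOneAdd_pcomp_adjoint_and_mem_graph (hT : T.IsClosed)
    (hT' : Dense (T.domain : Set E)) :
    ∃ A B : E →L[ℂ] E, IsInvOneAdd (pcomp T† T) A ∧ ∀ z, (A z, B z) ∈ T.graph := by
  obtain ⟨A, hA⟩ := exists_isInvOneAdd_pcomp_adjoint hT hT'
  have hdom : ∀ z, A z ∈ T.domain := fun z =>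
    mem_domain_of_mem_graph (hA.exists_mem_graph z).choose_spec.1
  let B := T.toFun ∘ₗ A.codRestrict T.domain hdom
  have hB : ∀ z, (A z, B z) ∈ T.graph := fun z => T.mem_graph ⟨A z, hdom z⟩
  have hnorm : ∀ z, ‖A z‖ ≤ ‖z‖ ∧ ‖B z‖ ≤ ‖z‖ := fun z =>
    norm_le_of_mem_graph_of_mem_graph_adjoint hT' (hB z) (hA.mem_graph_of_mem_graph (hB z))
  exact ⟨A.mkContinuous 1 fun z => by simpa using (hnorm z).1,
    B.mkContinuous 1 fun z => by simpa using (hnorm z).2, hA, hB⟩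

variable {A B : E →L[ℂ] E}

theorem isSelfAdjoint_of_isInvOneAdd (hT' : Dense (T.domain : Set E))
    (hA : IsInvOneAdd (pcomp T† T) A) (hB : ∀ z, (A z, B z) ∈ T.graph) : IsSelfAdjoint A := by
  have key : ∀ x y, ⟪A x, y⟫_ℂ = ⟪A x, A y⟫_ℂ + ⟪B x, B y⟫_ℂ := fun x y => by
    rw [inner_eq_of_mem_graph_adjoint hT' (hB x) (hA.mem_graph_of_mem_graph (hB y)),
      ← inner_add_right, add_sub_cancel]
  rw [ContinuousLinearMap.isSelfAdjoint_iff_isSymmetric]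
  intro x y
  calc ⟪A x, y⟫_ℂ = ⟪A x, A y⟫_ℂ + ⟪B x, B y⟫_ℂ := key x y
    _ = starRingEnd ℂ (⟪A y, A x⟫_ℂ + ⟪B y, B x⟫_ℂ) := by
      rw [_root_.map_add, inner_conj_symm, inner_conj_symm]
    _ = ⟪x, A y⟫_ℂ := by rw [← key, inner_conj_symm]

theorem mk_adjoint_apply_mem_graph_adjoint (hT' : Dense (T.domain : Set E))
    (hA : IsInvOneAdd (pcomp T† T) A) (hA' : IsInvOneAdd (pcomp T T†) A)
    (hB : ∀ z, (A z, B z) ∈ T.graph) (x : E) :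
    (A x, ContinuousLinearMap.adjoint B x) ∈ T†.graph := by
  obtain ⟨u, hu, huT⟩ := hA'.exists_mem_graph x
  suffices ContinuousLinearMap.adjoint B x = u by rwa [this]
  refine ext_inner_right ℂ fun y => ?_
  have h1 := inner_eq_of_mem_graph_adjoint hT' (hB y) hu
  have h2 := inner_eq_of_mem_graph_adjoint hT' huT (hA.mem_graph_of_mem_graph (hB y))
  calc ⟪ContinuousLinearMap.adjoint B x, y⟫_ℂ = ⟪x, B y⟫_ℂ :=
        ContinuousLinearMap.adjoint_inner_left B y x
    _ = starRingEnd ℂ ⟪B y, A x⟫_ℂ + ⟪x - A x, B y⟫_ℂ := by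
        rw [inner_conj_symm, ← inner_add_left, add_sub_cancel]
    _ = ⟪u, y⟫_ℂ := by
        rw [h1, h2, inner_conj_symm, ← inner_add_right, add_sub_cancel]

end Resolvent

theorem stmt10 (T : H →ₗ.[ℂ] H) (hclosed : T.IsClosed)
    (hdense : Dense (T.domain : Set H)) (hnormal : pcomp T† T = pcomp T T†) :
    ∃ A B : H →L[ℂ] H, Function.Injective A ∧ IsSelfAdjoint A ∧
      (ContinuousLinearMap.adjoint B ∘L B = B ∘L ContinuousLinearMap.adjoint B) ∧
      A ∘L B = B ∘L A ∧
      (∀ x : H, x ∈ T.domain ↔ B x ∈ Set.range A) ∧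
      (∀ x : T.domain, A (T x) = B (x : H)) := by
  obtain ⟨A, B, hA, hB⟩ := exists_isInvOneAdd_pcomp_adjoint_and_mem_graph hclosed hdense
  have hA' : IsInvOneAdd (pcomp T T†) A := hnormal ▸ hA
  have hB' := mk_adjoint_apply_mem_graph_adjoint hdense hA hA' hB
  have hgraph : ∀ x y, (x, y) ∈ T.graph ↔ B x = A y := fun x y => hA.mem_graph_iff hnormal hB
  refine ⟨A, B, hA.injective, isSelfAdjoint_of_isInvOneAdd hdense hA hB, ?_, ?_, fun x => ?_,
    fun x => ((hgraph _ _).mp (T.mem_graph x)).symm⟩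
  · ext z
    exact (hA.apply_apply hnormal hB hB' z).trans (hA'.apply_apply hnormal.symm hB' hB z).symm
  · ext z
    exact hA.apply_comm hnormal hB z
  · simp only [mem_domain_iff, hgraph, Set.mem_range, eq_comm]
end

section
/- Every self-adjoint (possibly unbounded) operator T on a Hilbert space H admits a decomposition T = A⁻¹B where A and B are bounded self-adjoint operators, A is injective, and AB = BA. -/
/-!
Project `(h, 0)` orthogonally onto the graph of `T = T†` in the Hilbert sum `H ⊕ H` and call the
result `(A h, B h)`. Membership in the graph says `A h ∈ dom T` with `T (A h) = B h`; orthogonality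
of `(h - A h, -B h)` to the graph says `B h ∈ dom T† = dom T` with `T (B h) = h - A h`. Thus
`A = (1 + T²)⁻¹` and `B = T (1 + T²)⁻¹`. `A` is self-adjoint as a compression of a projection,
symmetry of `T` makes `B` self-adjoint and gives `A T ⊆ B`, so `A B = A T A = B A`; finally
`x = A x + T (B x)`, so `B x = A z` forces `x = A x + B z ∈ dom T`.
-/

open LinearPMap
open scoped LinearPMap InnerProduct

variable {H : Type*} [NormedAddCommGroup H] [InnerProductSpace ℂ H] [CompleteSpace H]

noncomputable example (T : H →ₗ.[ℂ] H) : H →ₗ.[ℂ] H := pid + pcomp T† T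

open scoped InnerProductSpace

namespace LinearPMap

variable {𝕜 E : Type*} [RCLike 𝕜] [NormedAddCommGroup E] [InnerProductSpace 𝕜 E]

/-- For densely defined `T` this is the graph of `T†`
(`LinearPMap.adjoint_graph_eq_graph_adjoint`), placed in the Hilbert sum to have projections. -/
def adjointGraphL2 (T : E →ₗ.[𝕜] E) : Submodule 𝕜 (WithLp 2 (E × E)) where
  carrier := {p | ∀ v : T.domain, ⟪p.snd, (v : E)⟫_𝕜 = ⟪p.fst, T v⟫_𝕜}
  add_mem' ha hb v := by
    simp only [WithLp.add_fst, WithLp.add_snd, inner_add_left, ha v, hb v]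
  zero_mem' v := by simp
  smul_mem' c p hp v := by simp [inner_smul_left, hp v]

theorem isClosed_adjointGraphL2 (T : E →ₗ.[𝕜] E) :
    _root_.IsClosed (T.adjointGraphL2 : Set (WithLp 2 (E × E))) := by
  simp only [adjointGraphL2, Submodule.coe_set_mk, AddSubmonoid.coe_set_mk,
    AddSubsemigroup.coe_set_mk, Set.ofPred_forall]
  exact isClosed_iInter fun v =>
    isClosed_eq ((WithLp.sndL 2 𝕜 E E).continuous.inner continuous_const)
      ((WithLp.fstL 2 𝕜 E E).continuous.inner continuous_const)

variable [CompleteSpace E]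

instance (T : E →ₗ.[𝕜] E) : CompleteSpace T.adjointGraphL2 :=
  (isClosed_adjointGraphL2 T).completeSpace_coe

noncomputable def adjointGraphProjFst (T : E →ₗ.[𝕜] E) : E →L[𝕜] E :=
  WithLp.fstL 2 𝕜 E E ∘L T.adjointGraphL2.starProjection ∘L
    (WithLp.prodContinuousLinearEquiv 2 𝕜 E E).symm.toContinuousLinearMap ∘L
      ContinuousLinearMap.inl 𝕜 E E

noncomputable def adjointGraphProjSnd (T : E →ₗ.[𝕜] E) : E →L[𝕜] E :=
  WithLp.sndL 2 𝕜 E E ∘L T.adjointGraphL2.starProjection ∘L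
    (WithLp.prodContinuousLinearEquiv 2 𝕜 E E).symm.toContinuousLinearMap ∘L
      ContinuousLinearMap.inl 𝕜 E E

variable (T : E →ₗ.[𝕜] E)

theorem adjointGraphProjFst_apply (h : E) : T.adjointGraphProjFst h =
    (T.adjointGraphL2.starProjection (WithLp.toLp 2 (h, 0))).fst := rfl

theorem adjointGraphProjSnd_apply (h : E) : T.adjointGraphProjSnd h =
    (T.adjointGraphL2.starProjection (WithLp.toLp 2 (h, 0))).snd := rfl

theorem inner_adjointGraphProjSnd (h : E) (v : T.domain) :
    ⟪T.adjointGraphProjSnd h, (v : E)⟫_𝕜 = ⟪T.adjointGraphProjFst h, T v⟫_𝕜 :=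
  T.adjointGraphL2.starProjection_apply_mem _ v

theorem isSelfAdjoint_adjointGraphProjFst : IsSelfAdjoint T.adjointGraphProjFst :=
  ContinuousLinearMap.isSelfAdjoint_iff_isSymmetric.mpr fun h k => by
    simpa [adjointGraphProjFst_apply] using T.adjointGraphL2.inner_starProjection_left_eq_right
      (WithLp.toLp 2 (h, 0)) (WithLp.toLp 2 (k, 0))

variable {T}

theorem inner_sub_adjointGraphProjFst (hT : T.IsFormalAdjoint T) (h : E) (v : T.domain) :
    ⟪h - T.adjointGraphProjFst h, (v : E)⟫_𝕜 = ⟪T.adjointGraphProjSnd h, T v⟫_𝕜 := by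
  have hv : WithLp.toLp 2 ((v : E), T v) ∈ T.adjointGraphL2 := hT v
  simpa [adjointGraphProjFst_apply, adjointGraphProjSnd_apply, add_neg_eq_zero] using
    T.adjointGraphL2.starProjection_inner_eq_zero (WithLp.toLp 2 (h, 0)) _ hv

theorem adjointGraphProjFst_injective (hd : Dense (T.domain : Set E))
    (hT : T.IsFormalAdjoint T) : Function.Injective T.adjointGraphProjFst := by
  refine (injective_iff_map_eq_zero _).mpr fun h hA => ?_
  have hB : T.adjointGraphProjSnd h = 0 :=
    hd.eq_zero_of_inner_left 𝕜 fun v hv => by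
      simpa [hA] using T.inner_adjointGraphProjSnd h ⟨v, hv⟩
  have : h - T.adjointGraphProjFst h = 0 :=
    hd.eq_zero_of_inner_left 𝕜 fun v hv => by
      simpa [hB] using inner_sub_adjointGraphProjFst hT h ⟨v, hv⟩
  simpa [hA] using this

end LinearPMap

namespace IsSelfAdjoint

variable {𝕜 E : Type*} [RCLike 𝕜] [NormedAddCommGroup E] [InnerProductSpace 𝕜 E]
  [CompleteSpace E] {T : E →ₗ.[𝕜] E}

theorem isFormalAdjoint (hT : IsSelfAdjoint T) : T.IsFormalAdjoint T := by
  simpa only [isSelfAdjoint_def.mp hT] using adjoint_isFormalAdjoint hT.dense_domain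

theorem mem_domain_of_inner (hT : IsSelfAdjoint T) {a b : E}
    (hab : ∀ v : T.domain, ⟪b, (v : E)⟫_𝕜 = ⟪a, T v⟫_𝕜) : a ∈ T.domain := by
  simpa only [isSelfAdjoint_def.mp hT] using mem_adjoint_domain_of_exists a ⟨b, hab⟩

theorem apply_eq_of_inner (hT : IsSelfAdjoint T) {a b : E}
    (hab : ∀ v : T.domain, ⟪b, (v : E)⟫_𝕜 = ⟪a, T v⟫_𝕜) :
    T ⟨a, hT.mem_domain_of_inner hab⟩ = b :=
  (LinearPMap.ext_iff.mp hT).2.symm.trans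
    (adjoint_apply_eq hT.dense_domain ⟨a, mem_adjoint_domain_of_exists a ⟨b, hab⟩⟩ hab)

theorem adjointGraphProjFst_mem_domain (hT : IsSelfAdjoint T) (h : E) :
    T.adjointGraphProjFst h ∈ T.domain :=
  hT.mem_domain_of_inner (T.inner_adjointGraphProjSnd h)

theorem apply_adjointGraphProjFst (hT : IsSelfAdjoint T) (h : E) :
    T ⟨T.adjointGraphProjFst h, hT.adjointGraphProjFst_mem_domain h⟩ = T.adjointGraphProjSnd h :=
  hT.apply_eq_of_inner (T.inner_adjointGraphProjSnd h)

theorem adjointGraphProjSnd_mem_domain (hT : IsSelfAdjoint T) (h : E) :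
    T.adjointGraphProjSnd h ∈ T.domain :=
  hT.mem_domain_of_inner (inner_sub_adjointGraphProjFst hT.isFormalAdjoint h)

theorem apply_adjointGraphProjSnd (hT : IsSelfAdjoint T) (h : E) :
    T ⟨T.adjointGraphProjSnd h, hT.adjointGraphProjSnd_mem_domain h⟩ =
      h - T.adjointGraphProjFst h :=
  hT.apply_eq_of_inner (inner_sub_adjointGraphProjFst hT.isFormalAdjoint h)

theorem isSelfAdjoint_adjointGraphProjSnd (hT : IsSelfAdjoint T) :
    IsSelfAdjoint T.adjointGraphProjSnd := by
  refine ContinuousLinearMap.isSelfAdjoint_iff_isSymmetric.mpr fun h k => ?_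
  have hBk := inner_sub_adjointGraphProjFst hT.isFormalAdjoint h
    ⟨_, hT.adjointGraphProjSnd_mem_domain k⟩
  have hAk := T.inner_adjointGraphProjSnd h ⟨_, hT.adjointGraphProjFst_mem_domain k⟩
  rw [hT.apply_adjointGraphProjSnd, inner_sub_left, inner_sub_right] at hBk
  rw [hT.apply_adjointGraphProjFst] at hAk
  change ⟪T.adjointGraphProjSnd h, k⟫_𝕜 = ⟪h, T.adjointGraphProjSnd k⟫_𝕜
  linear_combination hAk - hBk

theorem adjointGraphProjFst_apply_eq (hT : IsSelfAdjoint T) (x : T.domain) :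
    T.adjointGraphProjFst (T x) = T.adjointGraphProjSnd x := by
  refine ext_inner_right 𝕜 fun k => ?_
  calc ⟪T.adjointGraphProjFst (T x), k⟫_𝕜 = ⟪T x, T.adjointGraphProjFst k⟫_𝕜 :=
        T.isSelfAdjoint_adjointGraphProjFst.isSymmetric _ _
    _ = ⟪(x : E), T ⟨_, hT.adjointGraphProjFst_mem_domain k⟩⟫_𝕜 :=
      hT.isFormalAdjoint x ⟨_, hT.adjointGraphProjFst_mem_domain k⟩
    _ = ⟪(x : E), T.adjointGraphProjSnd k⟫_𝕜 := by rw [hT.apply_adjointGraphProjFst]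
    _ = ⟪T.adjointGraphProjSnd x, k⟫_𝕜 :=
      (hT.isSelfAdjoint_adjointGraphProjSnd.isSymmetric _ _).symm

theorem adjointGraphProjFst_comp_adjointGraphProjSnd (hT : IsSelfAdjoint T) :
    T.adjointGraphProjFst ∘L T.adjointGraphProjSnd =
      T.adjointGraphProjSnd ∘L T.adjointGraphProjFst := by
  ext h
  rw [ContinuousLinearMap.comp_apply, ← hT.apply_adjointGraphProjFst h]
  exact hT.adjointGraphProjFst_apply_eq _

theorem mem_domain_iff_adjointGraphProjSnd_mem_range (hT : IsSelfAdjoint T) (x : E) :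
    x ∈ T.domain ↔ T.adjointGraphProjSnd x ∈ Set.range T.adjointGraphProjFst := by
  refine ⟨fun hx => ⟨T ⟨x, hx⟩, hT.adjointGraphProjFst_apply_eq ⟨x, hx⟩⟩, ?_⟩
  rintro ⟨z, hz⟩
  have hx : x = T.adjointGraphProjFst x + T.adjointGraphProjSnd z := calc
    x = T.adjointGraphProjFst x + T ⟨_, hT.adjointGraphProjSnd_mem_domain x⟩ := by
      rw [hT.apply_adjointGraphProjSnd, add_sub_cancel]
    _ = T.adjointGraphProjFst x + T ⟨_, hT.adjointGraphProjFst_mem_domain z⟩ := by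
      simp_rw [hz]
    _ = T.adjointGraphProjFst x + T.adjointGraphProjSnd z := by
      rw [hT.apply_adjointGraphProjFst]
  rw [hx]
  exact add_mem (hT.adjointGraphProjFst_mem_domain x) (hT.adjointGraphProjSnd_mem_domain z)

end IsSelfAdjoint

theorem stmt11 (T : H →ₗ.[ℂ] H) (hsa : IsSelfAdjoint T) :
    ∃ A B : H →L[ℂ] H, Function.Injective A ∧ IsSelfAdjoint A ∧ IsSelfAdjoint B ∧
      A ∘L B = B ∘L A ∧
      (∀ x : H, x ∈ T.domain ↔ B x ∈ Set.range A) ∧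
      (∀ x : T.domain, A (T x) = B (x : H)) :=
  ⟨T.adjointGraphProjFst, T.adjointGraphProjSnd,
    adjointGraphProjFst_injective hsa.dense_domain hsa.isFormalAdjoint,
    T.isSelfAdjoint_adjointGraphProjFst, hsa.isSelfAdjoint_adjointGraphProjSnd,
    hsa.adjointGraphProjFst_comp_adjointGraphProjSnd,
    hsa.mem_domain_iff_adjointGraphProjSnd_mem_range, hsa.adjointGraphProjFst_apply_eq⟩
end
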